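/- arXiv:2511.12534 — 2 statements merged into one kernel-verified Lean document; each statement's English description precedes it below -/
import Mathlib

section
/- Under the family elliptical potential setting, Σ_{i∈I} Σ_{m=1}^{M_i} n^i_m · ‖c^i_m‖_{(V^i_m)⁻¹} ≤ √(2·d·|I|·T·log(1 + T/(λ·d))). -/
/-!
For a single family, the matrix determinant lemma gives
`det V_{M+1} = λ^d ∏_m (1 + n_m ‖c_m‖²_{V_m⁻¹})`, while AM–GM on the eigenvalues bounds
`det V_{M+1} ≤ (tr V_{M+1} / d)^d ≤ (λ + τ/d)^d`. As every `x = n_m ‖c_m‖²_{V_m⁻¹}` lies in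
`[0, 1]`, where `x ≤ 2 log (1 + x)`, the family's total potential is at most
`2 d log (1 + τ/(λ d))`. Cauchy–Schwarz over all pairs `(i, m)` with weights `n^i_m` then
bounds the sum of the norms by the square root of `T` times the sum of the potentials.
-/

open Matrix Finset

lemma Real.le_two_mul_log_one_add {x : ℝ} (h0 : 0 ≤ x) (h1 : x ≤ 1) :
    x ≤ 2 * Real.log (1 + x) := by
  have hlog := Real.one_sub_inv_le_log_of_pos (by linarith : 0 < 1 + x)
  have hx : 1 - (1 + x)⁻¹ = x / (1 + x) := by field_simp; ring
  have : x / 2 ≤ x / (1 + x) := div_le_div_of_nonneg_left h0 (by linarith) (by linarith)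
  linarith

lemma Real.prod_le_sum_div_card_pow {ι : Type*} (s : Finset ι) {z : ι → ℝ}
    (hz : ∀ i ∈ s, 0 ≤ z i) : ∏ i ∈ s, z i ≤ ((∑ i ∈ s, z i) / #s) ^ #s := by
  rcases s.eq_empty_or_nonempty with rfl | hs
  · simp
  have hcard : (#s : ℝ) ≠ 0 := by positivity
  have hAM := Real.geom_mean_le_arith_mean_weighted s (fun _ ↦ (#s : ℝ)⁻¹) z
    (fun _ _ ↦ by positivity) (by simp [hcard]) hz
  calc ∏ i ∈ s, z i = (∏ i ∈ s, z i ^ (#s : ℝ)⁻¹) ^ #s := by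
        rw [← prod_pow]
        refine prod_congr rfl fun i hi ↦ ?_
        rw [← Real.rpow_natCast, ← Real.rpow_mul (hz i hi), inv_mul_cancel₀ hcard, Real.rpow_one]
    _ ≤ (∑ i ∈ s, (#s : ℝ)⁻¹ * z i) ^ #s := by
        gcongr
        exact prod_nonneg fun i hi ↦ Real.rpow_nonneg (hz i hi) _
    _ = ((∑ i ∈ s, z i) / #s) ^ #s := by rw [← mul_sum, inv_mul_eq_div]

lemma Matrix.PosSemidef.det_le_trace_div_card_pow {n : Type*} [Fintype n] [DecidableEq n]
    {A : Matrix n n ℝ} (hA : A.PosSemidef) :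
    A.det ≤ (A.trace / Fintype.card n) ^ Fintype.card n := by
  rw [hA.isHermitian.det_eq_prod_eigenvalues, hA.isHermitian.trace_eq_sum_eigenvalues]
  simpa using Real.prod_le_sum_div_card_pow univ fun i _ ↦ hA.eigenvalues_nonneg i

lemma Matrix.det_add_vecMulVec {n R : Type*} [Fintype n] [DecidableEq n] [CommRing R]
    {A : Matrix n n R} (hA : IsUnit A.det) (u v : n → R) :
    (A + vecMulVec u v).det = A.det * (1 + v ⬝ᵥ A⁻¹ *ᵥ u) := by
  rw [vecMulVec_eq Unit, det_add_replicateCol_mul_replicateRow hA, Matrix.mul_assoc,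
    ← replicateCol_mulVec, det_unique (n := Unit), add_apply, one_apply_eq,
    replicateRow_mul_replicateCol_apply]

lemma Finset.sum_sum_mul_sqrt_le {ι κ : Type*} (s : Finset ι) (t : ι → Finset κ)
    {a b : ι → κ → ℝ} (ha : ∀ i ∈ s, ∀ k ∈ t i, 0 ≤ a i k) (hb : ∀ i ∈ s, ∀ k ∈ t i, 0 ≤ b i k) :
    ∑ i ∈ s, ∑ k ∈ t i, a i k * √(b i k) ≤
      √((∑ i ∈ s, ∑ k ∈ t i, a i k) * ∑ i ∈ s, ∑ k ∈ t i, a i k * b i k) := by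
  rw [sum_sigma' s t, sum_sigma' s t, sum_sigma' s t]
  refine Real.le_sqrt_of_sq_le (sum_sq_le_sum_mul_sum_of_sq_le_mul _ (fun p hp ↦ ?_)
    (fun p hp ↦ ?_) fun p hp ↦ ?_) <;> obtain ⟨hi, hk⟩ := mem_sigma.1 hp
  · exact ha _ hi _ hk
  · exact mul_nonneg (ha _ hi _ hk) (hb _ hi _ hk)
  · rw [mul_pow, Real.sq_sqrt (hb _ hi _ hk), sq, mul_assoc]

namespace DesignMatrix

variable {d M : ℕ} {lam : ℝ} {c : ℕ → Fin d → ℝ} {n : ℕ → ℕ} {V : ℕ → Matrix (Fin d) (Fin d) ℝ}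

lemma posDef (hlam : 0 < lam) (hV1 : V 1 = lam • 1)
    (hVrec : ∀ m, 1 ≤ m → m ≤ M → V (m + 1) = V m + (n m : ℝ) • vecMulVec (c m) (c m))
    {m : ℕ} (hm1 : 1 ≤ m) (hmM : m ≤ M + 1) : (V m).PosDef := by
  induction m, hm1 using Nat.le_induction with
  | base => rw [hV1]; exact PosDef.one.smul hlam
  | succ m hm ih =>
    rw [hVrec m hm (by omega)]
    exact (ih (by omega)).add_posSemidef
      ((posSemidef_vecMulVec_self_star (c m)).smul (Nat.cast_nonneg (n m)))

lemma potential_nonneg (hlam : 0 < lam) (hV1 : V 1 = lam • 1)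
    (hVrec : ∀ m, 1 ≤ m → m ≤ M → V (m + 1) = V m + (n m : ℝ) • vecMulVec (c m) (c m))
    {m : ℕ} (hm : m ∈ Icc 1 M) : 0 ≤ c m ⬝ᵥ (V m)⁻¹ *ᵥ c m := by
  obtain ⟨hm1, hmM⟩ := mem_Icc.1 hm
  simpa using (posDef hlam hV1 hVrec hm1 (by omega)).inv.posSemidef.dotProduct_mulVec_nonneg (c m)

lemma det_succ_eq (hlam : 0 < lam) (hV1 : V 1 = lam • 1)
    (hVrec : ∀ m, 1 ≤ m → m ≤ M → V (m + 1) = V m + (n m : ℝ) • vecMulVec (c m) (c m))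
    {k : ℕ} (hk : k ≤ M) :
    (V (k + 1)).det = lam ^ d * ∏ j ∈ Icc 1 k, (1 + n j * (c j ⬝ᵥ (V j)⁻¹ *ᵥ c j)) := by
  induction k with
  | zero => simp [hV1]
  | succ k ih =>
    have hdet := (posDef hlam hV1 hVrec (by omega) (by omega : k + 1 ≤ M + 1)).det_pos
    rw [hVrec (k + 1) (by omega) hk, ← smul_vecMulVec, det_add_vecMulVec hdet.ne'.isUnit,
      ih (by omega), prod_Icc_succ_top (by omega), mulVec_smul, dotProduct_smul, smul_eq_mul,
      mul_assoc]

lemma trace_succ_le (hV1 : V 1 = lam • 1)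
    (hVrec : ∀ m, 1 ≤ m → m ≤ M → V (m + 1) = V m + (n m : ℝ) • vecMulVec (c m) (c m))
    (hc : ∀ m, 1 ≤ m → m ≤ M → c m ⬝ᵥ c m ≤ 1) {k : ℕ} (hk : k ≤ M) :
    (V (k + 1)).trace ≤ lam * d + ∑ j ∈ Icc 1 k, (n j : ℝ) := by
  induction k with
  | zero => simp [hV1]
  | succ k ih =>
    rw [hVrec (k + 1) (by omega) hk, trace_add, trace_smul, trace_vecMulVec, smul_eq_mul,
      sum_Icc_succ_top (by omega), ← add_assoc]
    gcongr
    · exact ih (by omega)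
    · exact mul_le_of_le_one_right (Nat.cast_nonneg _) (hc (k + 1) (by omega) hk)

lemma sum_log_one_add_potential_le (hlam : 0 < lam) (hV1 : V 1 = lam • 1)
    (hVrec : ∀ m, 1 ≤ m → m ≤ M → V (m + 1) = V m + (n m : ℝ) • vecMulVec (c m) (c m))
    (hc : ∀ m, 1 ≤ m → m ≤ M → c m ⬝ᵥ c m ≤ 1) :
    ∑ m ∈ Icc 1 M, Real.log (1 + n m * (c m ⬝ᵥ (V m)⁻¹ *ᵥ c m)) ≤
      d * Real.log (1 + (∑ m ∈ Icc 1 M, (n m : ℝ)) / (lam * d)) := by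
  rcases Nat.eq_zero_or_pos d with rfl | hd
  · simp
  have hpos : ∀ m ∈ Icc 1 M, 0 < 1 + n m * (c m ⬝ᵥ (V m)⁻¹ *ᵥ c m) := fun m hm ↦ by
    have := mul_nonneg (Nat.cast_nonneg (n m)) (potential_nonneg hlam hV1 hVrec hm)
    linarith
  rw [← Real.log_prod fun m hm ↦ (hpos m hm).ne', ← Real.log_pow]
  refine Real.log_le_log (prod_pos hpos) (le_of_mul_le_mul_left ?_ (pow_pos hlam d))
  have hV := (posDef (m := M + 1) hlam hV1 hVrec (by omega) le_rfl).posSemidef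
  have hAMGM := hV.det_le_trace_div_card_pow
  rw [Fintype.card_fin, det_succ_eq hlam hV1 hVrec le_rfl] at hAMGM
  refine hAMGM.trans ?_
  rw [← mul_pow]
  gcongr
  · exact div_nonneg hV.trace_nonneg (Nat.cast_nonneg d)
  · calc (V (M + 1)).trace / d ≤ (lam * d + ∑ m ∈ Icc 1 M, (n m : ℝ)) / d := by
          gcongr
          exact trace_succ_le hV1 hVrec hc le_rfl
      _ = lam * (1 + (∑ m ∈ Icc 1 M, (n m : ℝ)) / (lam * d)) := by field_simp

lemma sum_potential_le (hlam : 0 < lam) (hV1 : V 1 = lam • 1)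
    (hVrec : ∀ m, 1 ≤ m → m ≤ M → V (m + 1) = V m + (n m : ℝ) • vecMulVec (c m) (c m))
    (hc : ∀ m, 1 ≤ m → m ≤ M → c m ⬝ᵥ c m ≤ 1)
    (hsmall : ∀ m, 1 ≤ m → m ≤ M → n m * (c m ⬝ᵥ (V m)⁻¹ *ᵥ c m) ≤ 1) :
    ∑ m ∈ Icc 1 M, n m * (c m ⬝ᵥ (V m)⁻¹ *ᵥ c m) ≤
      2 * d * Real.log (1 + (∑ m ∈ Icc 1 M, (n m : ℝ)) / (lam * d)) := by
  calc ∑ m ∈ Icc 1 M, n m * (c m ⬝ᵥ (V m)⁻¹ *ᵥ c m)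
      ≤ ∑ m ∈ Icc 1 M, 2 * Real.log (1 + n m * (c m ⬝ᵥ (V m)⁻¹ *ᵥ c m)) := by
        refine sum_le_sum fun m hm ↦ Real.le_two_mul_log_one_add
          (mul_nonneg (Nat.cast_nonneg _) (potential_nonneg hlam hV1 hVrec hm)) ?_
        obtain ⟨hm1, hmM⟩ := mem_Icc.1 hm
        exact hsmall m hm1 hmM
    _ ≤ 2 * (d * Real.log (1 + (∑ m ∈ Icc 1 M, (n m : ℝ)) / (lam * d))) := by
        rw [← mul_sum]
        gcongr
        exact sum_log_one_add_potential_le hlam hV1 hVrec hc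
    _ = _ := by ring

end DesignMatrix

theorem family_elliptical_potential_general {ι : Type*} [Fintype ι]
    {d : ℕ} (lam : ℝ) (hlam : 1 ≤ lam)
    (M : ι → ℕ) (c : ι → ℕ → Fin d → ℝ) (n : ι → ℕ → ℕ)
    (V : ι → ℕ → Matrix (Fin d) (Fin d) ℝ)
    (hc : ∀ i m, 1 ≤ m → m ≤ M i → Real.sqrt (∑ k, c i m k ^ 2) ≤ 1)
    (hV1 : ∀ i, V i 1 = lam • (1 : Matrix (Fin d) (Fin d) ℝ))
    (hVrec : ∀ i m, 1 ≤ m → m ≤ M i →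
      V i (m + 1) = V i m + (n i m : ℝ) • vecMulVec (c i m) (c i m))
    (hsmall : ∀ i m, 1 ≤ m → m ≤ M i →
      (n i m : ℝ) * (c i m ⬝ᵥ (V i m)⁻¹.mulVec (c i m)) ≤ 1)
    (T : ℝ) (hT : T = ∑ i, ∑ m ∈ Finset.Icc 1 (M i), (n i m : ℝ)) :
    ∑ i, ∑ m ∈ Finset.Icc 1 (M i),
        (n i m : ℝ) * Real.sqrt (c i m ⬝ᵥ (V i m)⁻¹.mulVec (c i m)) ≤
      Real.sqrt (2 * d * (Fintype.card ι) * T * Real.log (1 + T / (lam * d))) := by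
  have hlam0 : 0 < lam := by linarith
  have hnorm : ∀ i m, 1 ≤ m → m ≤ M i → c i m ⬝ᵥ c i m ≤ 1 := fun i m h1 h2 ↦ by
    simpa [dotProduct, sq] using hc i m h1 h2
  have hτ_le : ∀ i, ∑ m ∈ Icc 1 (M i), (n i m : ℝ) ≤ T := fun i ↦ hT ▸
    single_le_sum (f := fun j ↦ ∑ m ∈ Icc 1 (M j), (n j m : ℝ))
      (fun j _ ↦ sum_nonneg fun _ _ ↦ Nat.cast_nonneg _) (mem_univ i)
  have hfamily : ∀ i, ∑ m ∈ Icc 1 (M i), (n i m : ℝ) * (c i m ⬝ᵥ (V i m)⁻¹ *ᵥ c i m) ≤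
      2 * d * Real.log (1 + T / (lam * d)) := fun i ↦ by
    refine (DesignMatrix.sum_potential_le hlam0 (hV1 i) (hVrec i) (hnorm i) (hsmall i)).trans ?_
    gcongr
    exact hτ_le i
  calc _ ≤ √(T * ∑ i, ∑ m ∈ Icc 1 (M i), (n i m : ℝ) * (c i m ⬝ᵥ (V i m)⁻¹ *ᵥ c i m)) :=
        hT ▸ sum_sum_mul_sqrt_le _ _ (fun _ _ _ _ ↦ Nat.cast_nonneg _)
          fun i _ _ hm ↦ DesignMatrix.potential_nonneg hlam0 (hV1 i) (hVrec i) hm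
    _ ≤ √(T * (Fintype.card ι * (2 * d * Real.log (1 + T / (lam * d))))) := by
        gcongr
        · exact hT ▸ sum_nonneg fun i _ ↦ sum_nonneg fun m _ ↦ Nat.cast_nonneg (n i m)
        · simpa using sum_le_card_nsmul univ _ _ fun i _ ↦ hfamily i
    _ = _ := by ring_nf

/-- Family elliptical potential lemma:
`∑_{i∈I} ∑_{m=1}^{M_i} n^i_m ‖c^i_m‖_{(V^i_m)⁻¹} ≤ √(2 d |I| T log (1 + T/(λ d)))`. -/
theorem family_elliptical_potential {ι : Type*} [Fintype ι] [Nonempty ι]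
    {d : ℕ} (hd : 1 ≤ d) (lam : ℝ) (hlam : 1 ≤ lam)
    (M : ι → ℕ) (c : ι → ℕ → Fin d → ℝ) (n : ι → ℕ → ℕ)
    (V : ι → ℕ → Matrix (Fin d) (Fin d) ℝ)
    (hc : ∀ i m, 1 ≤ m → m ≤ M i → Real.sqrt (∑ k, c i m k ^ 2) ≤ 1)
    (hV1 : ∀ i, V i 1 = lam • (1 : Matrix (Fin d) (Fin d) ℝ))
    (hVrec : ∀ i m, 1 ≤ m → m ≤ M i →
      V i (m + 1) = V i m + (n i m : ℝ) • vecMulVec (c i m) (c i m))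
    (hsmall : ∀ i m, 1 ≤ m → m ≤ M i →
      (n i m : ℝ) * (c i m ⬝ᵥ (V i m)⁻¹.mulVec (c i m)) ≤ 1)
    (T : ℝ) (hT : T = ∑ i, ∑ m ∈ Finset.Icc 1 (M i), (n i m : ℝ)) :
    ∑ i, ∑ m ∈ Finset.Icc 1 (M i),
        (n i m : ℝ) * Real.sqrt (c i m ⬝ᵥ (V i m)⁻¹.mulVec (c i m)) ≤
      Real.sqrt (2 * d * (Fintype.card ι) * T * Real.log (1 + T / (lam * d))) :=
  family_elliptical_potential_general lam hlam M c n V hc hV1 hVrec hsmall T hT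
end

section
/- Under the family elliptical potential setting, suppose additionally that β ≥ 0 and that for every i ∈ I and every m, a real number δ^i_m satisfies |δ^i_m| ≤ β · ‖c^i_m‖_{(V^i_m)⁻¹}. Then Σ_{i∈I} Σ_{m=1}^{M_i} n^i_m · δ^i_m ≤ β · √(2·d·|I|·T·log(1 + T/(λ·d))). -/
/-!
For one family, the matrix determinant lemma gives
`det V_{m+1} = det V_m * (1 + n_m ‖c_m‖²_{V_m⁻¹})`, so by `u ≤ 2 log (1 + u)` on `[0, 1]` the
potential `∑ n_m ‖c_m‖²_{V_m⁻¹}` is at most `2 log (det V_{M+1} / λ^d)`. Concavity of `log` on the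
eigenvalues and `tr V_{M+1} ≤ λ d + τ` bound this by `2 d log (1 + τ / (λ d))`. Cauchy–Schwarz
over the rounds then gives `∑ n_m ‖c_m‖_{V_m⁻¹} ≤ √(2 d τ log (1 + τ / (λ d)))` for each family,
and Cauchy–Schwarz over the families gives `∑_i √τ_i ≤ √(|I| T)`.
-/

open Matrix Finset

lemma Real.le_two_mul_log_one_add_s13 {u : ℝ} (hu₀ : 0 ≤ u) (hu₂ : u ≤ 2) :
    u ≤ 2 * Real.log (1 + u) := by
  have h := Real.le_log_one_add_of_nonneg hu₀
  rw [div_le_iff₀ (by linarith)] at h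
  nlinarith

lemma Real.sum_mul_sqrt_le_sqrt_mul_sqrt {ι : Type*} (s : Finset ι) {w x : ι → ℝ}
    (hw : ∀ i ∈ s, 0 ≤ w i) (hx : ∀ i ∈ s, 0 ≤ x i) :
    ∑ i ∈ s, w i * √(x i) ≤ √(∑ i ∈ s, w i) * √(∑ i ∈ s, w i * x i) := by
  calc ∑ i ∈ s, w i * √(x i) = ∑ i ∈ s, √(w i) * (√(w i) * √(x i)) :=
        sum_congr rfl fun i hi => by rw [← mul_assoc, Real.mul_self_sqrt (hw i hi)]
    _ ≤ √(∑ i ∈ s, √(w i) ^ 2) * √(∑ i ∈ s, (√(w i) * √(x i)) ^ 2) :=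
        Real.sum_mul_le_sqrt_mul_sqrt s _ _
    _ = √(∑ i ∈ s, w i) * √(∑ i ∈ s, w i * x i) := by
        congr 2 <;> refine sum_congr rfl fun i hi => ?_
        · rw [Real.sq_sqrt (hw i hi)]
        · rw [mul_pow, Real.sq_sqrt (hw i hi), Real.sq_sqrt (hx i hi)]

namespace Matrix

variable {k : Type*} [Fintype k] [DecidableEq k]

lemma det_add_vecMulVec_s13 {A : Matrix k k ℝ} (hA : IsUnit A.det) (u v : k → ℝ) :
    (A + vecMulVec u v).det = A.det * (1 + v ⬝ᵥ A⁻¹ *ᵥ u) := by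
  rw [vecMulVec_eq Unit, det_add_replicateCol_mul_replicateRow hA, ← replicateRow_vecMul,
    det_unique (1 + _ : Matrix Unit Unit ℝ)]
  simp only [add_apply, one_apply_eq, replicateRow_mul_replicateCol_apply, ← dotProduct_mulVec]

lemma PosDef.log_det_le [Nonempty k] {A : Matrix k k ℝ} (hA : A.PosDef) :
    Real.log A.det ≤ Fintype.card k * Real.log (A.trace / Fintype.card k) := by
  set μ := hA.1.eigenvalues
  have hdet : A.det = ∏ i, μ i := by simpa using hA.1.det_eq_prod_eigenvalues
  have htr : A.trace = ∑ i, μ i := by simpa using hA.1.trace_eq_sum_eigenvalues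
  have hcard : (0 : ℝ) < Fintype.card k := by exact_mod_cast Fintype.card_pos
  set a := A.trace / Fintype.card k
  have htr_pos : 0 < A.trace := htr ▸ sum_pos (fun i _ => hA.eigenvalues_pos i) univ_nonempty
  have ha : 0 < a := div_pos htr_pos hcard
  calc Real.log A.det = ∑ i, Real.log (μ i) := by
        rw [hdet, Real.log_prod fun i _ => (hA.eigenvalues_pos i).ne']
    _ ≤ ∑ i, (Real.log a + (μ i / a - 1)) := by
        refine sum_le_sum fun i _ => ?_
        have := Real.log_le_sub_one_of_pos (div_pos (hA.eigenvalues_pos i) ha)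
        rwa [Real.log_div (hA.eigenvalues_pos i).ne' ha.ne', sub_le_iff_le_add'] at this
    _ = Fintype.card k * Real.log a := by
        rw [sum_add_distrib, sum_sub_distrib, ← sum_div, ← htr, div_div_cancel₀ htr_pos.ne']
        simp

end Matrix

lemma eq_add_sum_Icc_of_succ_eq_add {α : Type*} [AddCommMonoid α] {f g : ℕ → α} {N : ℕ}
    (h : ∀ m, 1 ≤ m → m ≤ N → f (m + 1) = f m + g m) :
    f (N + 1) = f 1 + ∑ m ∈ Icc 1 N, g m := by
  induction N with
  | zero => simp
  | succ N ih =>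
    rw [sum_Icc_succ_top (by omega), ← add_assoc, ← ih fun m h₁ h₂ => h m h₁ (by omega),
      h (N + 1) (by omega) le_rfl]

section RankOneUpdates

variable {k : Type*} [Fintype k] {V : ℕ → Matrix k k ℝ} {c : ℕ → k → ℝ}
  {w : ℕ → ℝ} {N : ℕ}

lemma posDef_of_rankOne_updates (h₁ : (V 1).PosDef) (hw : ∀ m, 0 ≤ w m)
    (hV : ∀ m, 1 ≤ m → m ≤ N → V (m + 1) = V m + w m • vecMulVec (c m) (c m)) :
    ∀ m, 1 ≤ m → m ≤ N + 1 → (V m).PosDef := by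
  intro m hm₁ hm
  induction m, hm₁ using Nat.le_induction with
  | base => exact h₁
  | succ m hm₁ ih =>
    rw [hV m hm₁ (by omega)]
    exact (ih (by omega)).add_posSemidef ((posSemidef_vecMulVec_self_star (c m)).smul (hw m))

lemma trace_of_rankOne_updates
    (hV : ∀ m, 1 ≤ m → m ≤ N → V (m + 1) = V m + w m • vecMulVec (c m) (c m)) :
    (V (N + 1)).trace = (V 1).trace + ∑ m ∈ Icc 1 N, w m * (c m ⬝ᵥ c m) :=
  eq_add_sum_Icc_of_succ_eq_add (f := fun m => (V m).trace) fun m h₁ h₂ => by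
    rw [hV m h₁ h₂, trace_add, trace_smul, trace_vecMulVec, smul_eq_mul]

lemma log_det_of_rankOne_updates [DecidableEq k] (h₁ : (V 1).PosDef) (hw : ∀ m, 0 ≤ w m)
    (hV : ∀ m, 1 ≤ m → m ≤ N → V (m + 1) = V m + w m • vecMulVec (c m) (c m)) :
    Real.log (V (N + 1)).det =
      Real.log (V 1).det + ∑ m ∈ Icc 1 N, Real.log (1 + w m * (c m ⬝ᵥ (V m)⁻¹ *ᵥ c m)) := by
  have hPD := posDef_of_rankOne_updates h₁ hw hV
  refine eq_add_sum_Icc_of_succ_eq_add (f := fun m => Real.log (V m).det) fun m h₁ h₂ => ?_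
  have hVm := hPD m h₁ (by omega)
  have hx : 0 ≤ c m ⬝ᵥ (V m)⁻¹ *ᵥ c m := hVm.inv.posSemidef.dotProduct_mulVec_nonneg (c m)
  have hpos : 0 < 1 + w m * (c m ⬝ᵥ (V m)⁻¹ *ᵥ c m) := by have := hw m; positivity
  rw [hV m h₁ h₂, ← smul_vecMulVec, det_add_vecMulVec_s13 (isUnit_iff_ne_zero.mpr hVm.det_pos.ne'),
    mulVec_smul, dotProduct_smul, smul_eq_mul, Real.log_mul hVm.det_pos.ne' hpos.ne']

theorem elliptical_potential_le [DecidableEq k] [Nonempty k] {lam : ℝ} (hlam : 0 < lam)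
    (hV₁ : V 1 = lam • 1) (hw : ∀ m, 0 ≤ w m)
    (hV : ∀ m, 1 ≤ m → m ≤ N → V (m + 1) = V m + w m • vecMulVec (c m) (c m))
    (hc : ∀ m, 1 ≤ m → m ≤ N → c m ⬝ᵥ c m ≤ 1)
    (hsmall : ∀ m, 1 ≤ m → m ≤ N → w m * (c m ⬝ᵥ (V m)⁻¹ *ᵥ c m) ≤ 1) :
    ∑ m ∈ Icc 1 N, w m * (c m ⬝ᵥ (V m)⁻¹ *ᵥ c m) ≤
      2 * Fintype.card k * Real.log (1 + (∑ m ∈ Icc 1 N, w m) / (lam * Fintype.card k)) := by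
  set d : ℝ := (Fintype.card k : ℝ)
  have hd : 0 < d := Nat.cast_pos.mpr Fintype.card_pos
  have hPD₁ : (V 1).PosDef := hV₁ ▸ PosDef.one.smul hlam
  have hPD := posDef_of_rankOne_updates hPD₁ hw hV
  have hlog₁ : Real.log (V 1).det = d * Real.log lam := by
    rw [hV₁, det_smul, det_one, mul_one, Real.log_pow]
  have htr : (V (N + 1)).trace ≤ lam * d + ∑ m ∈ Icc 1 N, w m := by
    rw [trace_of_rankOne_updates hV, hV₁, trace_smul, trace_one, smul_eq_mul]
    gcongr with m hm
    rw [mem_Icc] at hm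
    exact mul_le_of_le_one_right (hw m) (hc m hm.1 hm.2)
  have hlogN : Real.log (V (N + 1)).det - Real.log (V 1).det ≤
      d * Real.log (1 + (∑ m ∈ Icc 1 N, w m) / (lam * d)) := by
    have htr_pos : 0 < (V (N + 1)).trace := (hPD (N + 1) (by omega) le_rfl).trace_pos
    calc Real.log (V (N + 1)).det - Real.log (V 1).det
        ≤ d * Real.log ((V (N + 1)).trace / d) - d * Real.log lam := by
          rw [hlog₁]
          gcongr
          exact (hPD (N + 1) (by omega) le_rfl).log_det_le
      _ = d * Real.log ((V (N + 1)).trace / (lam * d)) := by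
          rw [← mul_sub, ← Real.log_div (by positivity) hlam.ne', div_div, mul_comm lam d]
      _ ≤ d * Real.log (1 + (∑ m ∈ Icc 1 N, w m) / (lam * d)) := by
          gcongr
          rw [one_add_div (mul_pos hlam hd).ne']
          gcongr
  calc ∑ m ∈ Icc 1 N, w m * (c m ⬝ᵥ (V m)⁻¹ *ᵥ c m)
      ≤ ∑ m ∈ Icc 1 N, 2 * Real.log (1 + w m * (c m ⬝ᵥ (V m)⁻¹ *ᵥ c m)) := by
        refine sum_le_sum fun m hm => ?_
        rw [mem_Icc] at hm
        have hx := (hPD m hm.1 (by omega)).inv.posSemidef.dotProduct_mulVec_nonneg (c m)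
        exact Real.le_two_mul_log_one_add_s13 (mul_nonneg (hw m) hx)
          ((hsmall m hm.1 hm.2).trans one_le_two)
    _ = 2 * (Real.log (V (N + 1)).det - Real.log (V 1).det) := by
        rw [← mul_sum, log_det_of_rankOne_updates hPD₁ hw hV, add_sub_cancel_left]
    _ ≤ 2 * d * Real.log (1 + (∑ m ∈ Icc 1 N, w m) / (lam * d)) := by
        rw [mul_assoc]
        gcongr

theorem elliptical_potential_sqrt_le [DecidableEq k] [Nonempty k] {lam : ℝ} (hlam : 0 < lam)
    (hV₁ : V 1 = lam • 1) (hw : ∀ m, 0 ≤ w m)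
    (hV : ∀ m, 1 ≤ m → m ≤ N → V (m + 1) = V m + w m • vecMulVec (c m) (c m))
    (hc : ∀ m, 1 ≤ m → m ≤ N → c m ⬝ᵥ c m ≤ 1)
    (hsmall : ∀ m, 1 ≤ m → m ≤ N → w m * (c m ⬝ᵥ (V m)⁻¹ *ᵥ c m) ≤ 1) :
    ∑ m ∈ Icc 1 N, w m * √(c m ⬝ᵥ (V m)⁻¹ *ᵥ c m) ≤ √(∑ m ∈ Icc 1 N, w m) *
      √(2 * Fintype.card k * Real.log (1 + (∑ m ∈ Icc 1 N, w m) / (lam * Fintype.card k))) := by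
  have hPD := posDef_of_rankOne_updates (hV₁ ▸ PosDef.one.smul hlam) hw hV
  refine (Real.sum_mul_sqrt_le_sqrt_mul_sqrt _ (fun m _ => hw m) fun m hm => ?_).trans ?_
  · obtain ⟨h₁, h₂⟩ := mem_Icc.mp hm
    exact (hPD m h₁ (h₂.trans N.le_succ)).inv.posSemidef.dotProduct_mulVec_nonneg (c m)
  · gcongr
    exact elliptical_potential_le hlam hV₁ hw hV hc hsmall

end RankOneUpdates

theorem family_elliptical_potential_errors_general {ι : Type*} [Fintype ι]
    {d : ℕ} (hd : 1 ≤ d) (lam : ℝ) (hlam : 1 ≤ lam)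
    (M : ι → ℕ) (c : ι → ℕ → Fin d → ℝ) (n : ι → ℕ → ℕ)
    (V : ι → ℕ → Matrix (Fin d) (Fin d) ℝ)
    (hc : ∀ i m, 1 ≤ m → m ≤ M i → Real.sqrt (∑ k, c i m k ^ 2) ≤ 1)
    (hV1 : ∀ i, V i 1 = lam • (1 : Matrix (Fin d) (Fin d) ℝ))
    (hVrec : ∀ i m, 1 ≤ m → m ≤ M i →
      V i (m + 1) = V i m + (n i m : ℝ) • vecMulVec (c i m) (c i m))
    (hsmall : ∀ i m, 1 ≤ m → m ≤ M i →
      (n i m : ℝ) * (c i m ⬝ᵥ (V i m)⁻¹.mulVec (c i m)) ≤ 1)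
    (T : ℝ) (hT : T = ∑ i, ∑ m ∈ Finset.Icc 1 (M i), (n i m : ℝ))
    (β : ℝ) (hβ : 0 ≤ β) (δ' : ι → ℕ → ℝ)
    (hδ' : ∀ i m, 1 ≤ m → m ≤ M i →
      |δ' i m| ≤ β * Real.sqrt (c i m ⬝ᵥ (V i m)⁻¹.mulVec (c i m))) :
    ∑ i, ∑ m ∈ Finset.Icc 1 (M i), (n i m : ℝ) * δ' i m ≤
      β * Real.sqrt (2 * d * (Fintype.card ι) * T * Real.log (1 + T / (lam * d))) := by
  have : Nonempty (Fin d) := ⟨⟨0, hd⟩⟩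
  set τ : ι → ℝ := fun i => ∑ m ∈ Icc 1 (M i), (n i m : ℝ)
  have hτ : ∀ i, 0 ≤ τ i := fun i => sum_nonneg fun m _ => (n i m).cast_nonneg
  have hT₀ : 0 ≤ T := hT ▸ sum_nonneg fun i _ => hτ i
  set K := √(2 * d * Real.log (1 + T / (lam * d))) with hK
  calc ∑ i, ∑ m ∈ Icc 1 (M i), (n i m : ℝ) * δ' i m
      ≤ β * ∑ i, ∑ m ∈ Icc 1 (M i), (n i m : ℝ) * √(c i m ⬝ᵥ (V i m)⁻¹ *ᵥ c i m) := by
        simp only [mul_sum, mul_left_comm β]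
        gcongr with i _ m hm
        exact (le_abs_self _).trans (hδ' i m (mem_Icc.mp hm).1 (mem_Icc.mp hm).2)
    _ ≤ β * ∑ i, √(τ i) * √1 * K := by
        gcongr with i
        refine (elliptical_potential_sqrt_le (one_pos.trans_le hlam) (hV1 i)
          (fun m => (n i m).cast_nonneg) (hVrec i)
          (fun m h₁ h₂ => by simpa [dotProduct, sq] using hc i m h₁ h₂) (hsmall i)).trans ?_
        rw [Real.sqrt_one, mul_one, Fintype.card_fin, hK]
        gcongr
        exact hT ▸ single_le_sum (f := τ) (fun j _ => hτ j) (mem_univ i)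
    _ ≤ β * (√T * √(Fintype.card ι) * K) := by
        rw [← sum_mul]
        gcongr
        simpa [← hT] using Real.sum_sqrt_mul_sqrt_le univ hτ fun _ => zero_le_one
    _ = β * √(2 * d * Fintype.card ι * T * Real.log (1 + T / (lam * d))) := by
        rw [hK, ← Real.sqrt_mul hT₀, ← Real.sqrt_mul (by positivity)]
        ring_nf

/-- Family elliptical potential lemma with errors: if `|δ^i_m| ≤ β ‖c^i_m‖_{(V^i_m)⁻¹}`, then
`∑_{i∈I} ∑_{m=1}^{M_i} n^i_m δ^i_m ≤ β √(2 d |I| T log (1 + T/(λ d)))`. -/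
theorem family_elliptical_potential_errors {ι : Type*} [Fintype ι] [Nonempty ι]
    {d : ℕ} (hd : 1 ≤ d) (lam : ℝ) (hlam : 1 ≤ lam)
    (M : ι → ℕ) (c : ι → ℕ → Fin d → ℝ) (n : ι → ℕ → ℕ)
    (V : ι → ℕ → Matrix (Fin d) (Fin d) ℝ)
    (hc : ∀ i m, 1 ≤ m → m ≤ M i → Real.sqrt (∑ k, c i m k ^ 2) ≤ 1)
    (hV1 : ∀ i, V i 1 = lam • (1 : Matrix (Fin d) (Fin d) ℝ))
    (hVrec : ∀ i m, 1 ≤ m → m ≤ M i →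
      V i (m + 1) = V i m + (n i m : ℝ) • vecMulVec (c i m) (c i m))
    (hsmall : ∀ i m, 1 ≤ m → m ≤ M i →
      (n i m : ℝ) * (c i m ⬝ᵥ (V i m)⁻¹.mulVec (c i m)) ≤ 1)
    (T : ℝ) (hT : T = ∑ i, ∑ m ∈ Finset.Icc 1 (M i), (n i m : ℝ))
    (β : ℝ) (hβ : 0 ≤ β) (δ' : ι → ℕ → ℝ)
    (hδ' : ∀ i m, 1 ≤ m → m ≤ M i →
      |δ' i m| ≤ β * Real.sqrt (c i m ⬝ᵥ (V i m)⁻¹.mulVec (c i m))) :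
    ∑ i, ∑ m ∈ Finset.Icc 1 (M i), (n i m : ℝ) * δ' i m ≤
      β * Real.sqrt (2 * d * (Fintype.card ι) * T * Real.log (1 + T / (lam * d))) :=
  family_elliptical_potential_errors_general hd lam hlam M c n V hc hV1 hVrec hsmall T hT β hβ δ'
    hδ'
end
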